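/- Let A be a Fréchet algebra and t_1,…,t_k ∈ A elements such that the subalgebra of polynomials in the identity e and t_1,…,t_k is dense in A. Let M be a closed maximal ideal of A containing t_1,…,t_k, and suppose dim_ℂ(cl(M^n)/cl(M^{n+1})) = C(n+k−1,n) for every n ≥ 1. Then there is an injective unital ℂ-algebra homomorphism Ψ̄ from A/⋂_{n≥1} cl(M^n) into the formal power series algebra ℂ[[X_1,…,X_k]] whose coefficient functionals π_I ∘ Ψ̄ (I ∈ ℕ^k) are continuous for the quotient topology; that is, A/⋂_{n≥1} cl(M^n) is a Fréchet algebra of power series in k variables. -/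

import Mathlib

/-- The closure of the `n`-th power of an ideal, viewed as a `ℂ`-submodule. -/
def idealPowClosure {A : Type*} [CommRing A] [Algebra ℂ A] [TopologicalSpace A]
    [ContinuousAdd A] [ContinuousConstSMul ℂ A] (M : Ideal A) (n : ℕ) : Submodule ℂ A :=
  ((M ^ n).restrictScalars ℂ).topologicalClosure

/-- The intersection `⋂_{n ≥ 1} cl(M^n)`, as an ideal. -/
def capClosure {A : Type*} [CommRing A] [TopologicalSpace A]
    [ContinuousAdd A] [ContinuousConstSMul A A] (M : Ideal A) : Ideal A :=
  ⨅ n : ℕ, (M ^ (n + 1)).topologicalClosure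

/-!
Write `J ⊆ ℂ[X]` for the ideal generated by the variables and `Qₙ = cl(Mⁿ)`. Since `tᵢ ∈ M`,
`P ↦ P(t)` sends `Jⁿ` into `Qₙ`, so its image in `A / Qₙ` is spanned by the images of the
polynomials of degree `< n`: a finite-dimensional, hence closed, subspace of the Hausdorff
space `A / Qₙ`, which is also dense because `ℂ[t]` is. So `ℂ[X] → A / Qₙ` is onto.

Its kernel is exactly `Jⁿ`, by induction on `n`: for `n = 1` because `M` is closed and proper,
and in the inductive step because the homogeneous polynomials of degree `n` map onto
`Qₙ / Qₙ₊₁`, a space of the same dimension `C(n+k-1, n)`, hence injectively. Thus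
`A / Qₙ ≅ ℂ[X] / Jⁿ` compatibly in `n`, and these isomorphisms assemble into an algebra map
`A → ℂ[[X]]` with kernel `⋂ Qₙ`. Each coefficient factors through some finite-dimensional
Hausdorff quotient `A / Qₙ` and is therefore continuous.
-/

open MvPolynomial
open MvPowerSeries (truncTotal)

namespace MvPolynomial

variable {σ R : Type*} [CommRing R]

theorem finrank_homogeneousSubmodule [Fintype σ] [Nontrivial R] (n : ℕ) :
    Module.finrank R (homogeneousSubmodule σ R n) = (n + Fintype.card σ - 1).choose n := by
  classical
  rw [homogeneousSubmodule_eq_finsupp_supported]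
  refine (Module.finrank_eq_nat_card_basis
    (basisRestrictSupport R {d : σ →₀ ℕ | d.degree = n})).trans ?_
  rw [add_comm, ← Finset.card_univ, ← Finset.card_finsuppAntidiag_nat_eq_choose,
    ← Nat.card_eq_finsetCard]
  exact Nat.card_congr (Equiv.subtypeEquivRight fun d => by
    simp [Finset.mem_finsuppAntidiag, Finsupp.degree_eq_sum])

theorem IsHomogeneous.mem_pow_idealOfVars {P : MvPolynomial σ R} {n : ℕ}
    (hP : P.IsHomogeneous n) : P ∈ idealOfVars σ R ^ n :=
  (mem_pow_idealOfVars_iff' n P).2 fun _ hd => hP.coeff_eq_zero hd.ne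

theorem sub_homogeneousComponent_mem_pow_idealOfVars_succ {P : MvPolynomial σ R} {n : ℕ}
    (hP : P ∈ idealOfVars σ R ^ n) :
    P - homogeneousComponent n P ∈ idealOfVars σ R ^ (n + 1) := by
  rw [mem_pow_idealOfVars_iff'] at hP ⊢
  intro d hd
  rw [coeff_sub, coeff_homogeneousComponent]
  split_ifs with h
  · exact sub_self _
  · rw [hP d (by omega), sub_zero]

theorem sub_truncTotal_mem_pow_idealOfVars [Finite σ] (P : MvPolynomial σ R) (n : ℕ) :
    P - truncTotal n (P : MvPowerSeries σ R) ∈ idealOfVars σ R ^ n :=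
  (mem_pow_idealOfVars_iff' n _).2 fun d hd => by
    rw [coeff_sub, MvPowerSeries.coeff_truncTotal _ hd, coeff_coe, sub_self]

theorem aeval_mem_pow_of_mem_pow_idealOfVars {A : Type*} [CommRing A] [Algebra R A]
    {M : Ideal A} {t : σ → A} (ht : ∀ i, t i ∈ M) {n : ℕ} {P : MvPolynomial σ R}
    (hP : P ∈ idealOfVars σ R ^ n) : aeval t P ∈ M ^ n := by
  have hJ : (idealOfVars σ R).map (aeval t) ≤ M := by
    rw [Ideal.map_span, Ideal.span_le]
    rintro _ ⟨_, ⟨i, rfl⟩, rfl⟩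
    simpa using ht i
  have hmap := Ideal.mem_map_of_mem (aeval t : MvPolynomial σ R →ₐ[R] A) hP
  rw [Ideal.map_pow] at hmap
  exact Ideal.pow_right_mono hJ n hmap

end MvPolynomial

section IdealPowClosure

variable {A : Type*} [CommRing A] [Algebra ℂ A] [TopologicalSpace A] [IsTopologicalAddGroup A]
  [ContinuousMul A] {M : Ideal A}

instance isClosed_idealPowClosure (n : ℕ) : IsClosed (idealPowClosure M n : Set A) :=
  Submodule.isClosed_topologicalClosure _

theorem pow_le_idealPowClosure (n : ℕ) : (M ^ n).restrictScalars ℂ ≤ idealPowClosure M n :=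
  Submodule.le_topologicalClosure _

theorem idealPowClosure_antitone : Antitone (idealPowClosure M) :=
  fun _ _ h => Submodule.topologicalClosure_mono fun _ hx => Ideal.pow_le_pow_right h hx

theorem idealPowClosure_zero : idealPowClosure M 0 = ⊤ :=
  top_le_iff.1 <| (pow_le_idealPowClosure 0).trans' <| by simp

theorem idealPowClosure_one (hM : IsClosed (M : Set A)) :
    idealPowClosure M 1 = M.restrictScalars ℂ :=
  SetLike.coe_injective <| by
    rw [idealPowClosure, Submodule.topologicalClosure_coe, pow_one, Submodule.coe_restrictScalars,
      hM.closure_eq]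

theorem mul_mem_idealPowClosure (a : A) {x : A} {n : ℕ} (hx : x ∈ idealPowClosure M n) :
    a * x ∈ idealPowClosure M n :=
  (M ^ n).topologicalClosure.smul_mem a hx

theorem mem_capClosure_iff {x : A} : x ∈ capClosure M ↔ ∀ n, x ∈ idealPowClosure M n := by
  refine Submodule.mem_iInf _ |>.trans ⟨fun h n => ?_, fun h n => h (n + 1)⟩
  cases n with
  | zero => simp [idealPowClosure_zero]
  | succ n => exact h n

abbrev idealPowGraded (M : Ideal A) (n : ℕ) : Type _ :=
  ↥(idealPowClosure M n) ⧸ (idealPowClosure M (n + 1)).comap (idealPowClosure M n).subtype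

end IdealPowClosure

section Evaluation

variable {A : Type*} [CommRing A] [Algebra ℂ A] [TopologicalSpace A] [IsTopologicalAddGroup A]
  [ContinuousMul A] {M : Ideal A} {σ : Type*} {t : σ → A}

theorem aeval_mem_idealPowClosure (ht : ∀ i, t i ∈ M) {n : ℕ} {P : MvPolynomial σ ℂ}
    (hP : P ∈ idealOfVars σ ℂ ^ n) : aeval t P ∈ idealPowClosure M n :=
  pow_le_idealPowClosure n (aeval_mem_pow_of_mem_pow_idealOfVars ht hP)

theorem aeval_sub_aeval_truncTotal_mem [Finite σ] (ht : ∀ i, t i ∈ M) (P : MvPolynomial σ ℂ)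
    (n : ℕ) : aeval t P - aeval t (truncTotal n (P : MvPowerSeries σ ℂ)) ∈ idealPowClosure M n :=
  map_sub (aeval t) P _ ▸ aeval_mem_idealPowClosure ht (sub_truncTotal_mem_pow_idealOfVars P n)

noncomputable def aevalMod (M : Ideal A) (t : σ → A) (n : ℕ) :
    MvPolynomial σ ℂ →ₗ[ℂ] A ⧸ idealPowClosure M n :=
  (idealPowClosure M n).mkQ ∘ₗ (aeval t).toLinearMap

theorem range_aevalMod_le [Finite σ] (ht : ∀ i, t i ∈ M) (n : ℕ) :
    LinearMap.range (aevalMod M t n) ≤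
      (restrictSupport ℂ {d : σ →₀ ℕ | d.degree < n}).map (aevalMod M t n) := by
  rintro _ ⟨P, rfl⟩
  refine ⟨truncTotal n (P : MvPowerSeries σ ℂ), fun d hd => ?_, ?_⟩
  · by_contra h
    exact mem_support_iff.1 hd (MvPowerSeries.coeff_truncTotal_eq_zero _ (not_lt.1 h))
  · exact (Submodule.Quotient.eq _).2 <|
      neg_sub (aeval t P) _ ▸ neg_mem (aeval_sub_aeval_truncTotal_mem ht P n)

theorem finiteDimensional_range_aevalMod [Finite σ] (ht : ∀ i, t i ∈ M) (n : ℕ) :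
    FiniteDimensional ℂ (LinearMap.range (aevalMod M t n)) :=
  have : Finite {d : σ →₀ ℕ | d.degree < n} := Finsupp.finite_of_degree_lt n
  have : FiniteDimensional ℂ (restrictSupport ℂ {d : σ →₀ ℕ | d.degree < n}) :=
    .of_basis (basisRestrictSupport ℂ _)
  Submodule.finiteDimensional_of_le (range_aevalMod_le ht n)

variable [ContinuousSMul ℂ A]

theorem range_aevalMod_eq_top [Finite σ] (ht : ∀ i, t i ∈ M)
    (hdense : Dense (Algebra.adjoin ℂ (Set.range t) : Set A)) (n : ℕ) :
    LinearMap.range (aevalMod M t n) = ⊤ := by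
  let Q := idealPowClosure M n
  have := finiteDimensional_range_aevalMod ht n
  have hdense' : Dense (LinearMap.range (aevalMod M t n) : Set (A ⧸ Q)) := by
    have h := (Q.mkQ_surjective.denseRange).dense_image
      (Q.isOpenQuotientMap_mkQ.continuous) hdense
    rwa [Algebra.adjoin_range_eq_range_aeval, AlgHom.coe_range, ← Set.range_comp] at h
  exact SetLike.coe_injective <|
    (Submodule.closed_of_finiteDimensional _).closure_eq.symm.trans hdense'.closure_eq

theorem exists_sub_aeval_mem_idealPowClosure [Finite σ] (ht : ∀ i, t i ∈ M)
    (hdense : Dense (Algebra.adjoin ℂ (Set.range t) : Set A)) (n : ℕ) (x : A) :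
    ∃ P : MvPolynomial σ ℂ, x - aeval t P ∈ idealPowClosure M n := by
  obtain ⟨P, hP⟩ :=
    (range_aevalMod_eq_top ht hdense n).ge (Submodule.mem_top (x := Submodule.Quotient.mk x))
  exact ⟨P, (Submodule.Quotient.eq _).1 hP.symm⟩

theorem finiteDimensional_quotient_idealPowClosure [Finite σ] (ht : ∀ i, t i ∈ M)
    (hdense : Dense (Algebra.adjoin ℂ (Set.range t) : Set A)) (n : ℕ) :
    FiniteDimensional ℂ (A ⧸ idealPowClosure M n) :=
  have := finiteDimensional_range_aevalMod ht n
  (LinearEquiv.ofTop _ (range_aevalMod_eq_top ht hdense n)).finiteDimensional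

end Evaluation

section Kernel

variable {A : Type*} [CommRing A] [Algebra ℂ A] [TopologicalSpace A] [IsTopologicalAddGroup A]
  [ContinuousMul A] {M : Ideal A} {σ : Type*} {t : σ → A}

theorem mem_idealOfVars_of_aeval_mem_idealPowClosure_one (ht : ∀ i, t i ∈ M)
    (hclosed : IsClosed (M : Set A)) (hM : M ≠ ⊤) {P : MvPolynomial σ ℂ}
    (hP : aeval t P ∈ idealPowClosure M 1) : P ∈ idealOfVars σ ℂ ^ 1 := by
  rw [idealPowClosure_one hclosed, Submodule.restrictScalars_mem] at hP
  have hsub : P - C (coeff 0 P) ∈ idealOfVars σ ℂ ^ 1 :=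
    (mem_pow_idealOfVars_iff' 1 _).2 fun d hd => by
      rw [Nat.lt_one_iff, Finsupp.degree_eq_zero_iff] at hd
      simp [hd]
  have hconst : algebraMap ℂ A (coeff 0 P) ∈ M := by
    have := M.sub_mem hP (pow_one M ▸ aeval_mem_pow_of_mem_pow_idealOfVars ht hsub)
    rwa [map_sub, aeval_C, sub_sub_cancel] at this
  have h0 : coeff 0 P = 0 := by
    by_contra h
    exact hM (M.eq_top_of_isUnit_mem hconst ((IsUnit.mk0 _ h).map _))
  simpa [h0] using hsub

noncomputable def gradedAeval (ht : ∀ i, t i ∈ M) (n : ℕ) :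
    homogeneousSubmodule σ ℂ n →ₗ[ℂ] idealPowGraded M n :=
  Submodule.mkQ _ ∘ₗ LinearMap.codRestrict (idealPowClosure M n)
    ((aeval t).toLinearMap ∘ₗ (homogeneousSubmodule σ ℂ n).subtype)
    fun P => aeval_mem_idealPowClosure ht P.2.mem_pow_idealOfVars

theorem gradedAeval_eq_zero_iff (ht : ∀ i, t i ∈ M) {n : ℕ} (P : homogeneousSubmodule σ ℂ n) :
    gradedAeval ht n P = 0 ↔ aeval t (P : MvPolynomial σ ℂ) ∈ idealPowClosure M (n + 1) :=
  Submodule.Quotient.mk_eq_zero _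

theorem coeff_eq_of_sub_aeval_mem
    (hker : ∀ n P, aeval t P ∈ idealPowClosure M n → P ∈ idealOfVars σ ℂ ^ n)
    {x : A} {n : ℕ} {P R : MvPolynomial σ ℂ} (hP : x - aeval t P ∈ idealPowClosure M n)
    (hR : x - aeval t R ∈ idealPowClosure M n) {d : σ →₀ ℕ} (hd : d.degree < n) :
    coeff d P = coeff d R := by
  have hRP : R - P ∈ idealOfVars σ ℂ ^ n :=
    hker n _ (by simpa only [map_sub, sub_sub_sub_cancel_left] using sub_mem hP hR)
  rw [eq_comm, ← sub_eq_zero, ← coeff_sub]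
  exact (mem_pow_idealOfVars_iff' n _).1 hRP d hd

variable [ContinuousSMul ℂ A]

theorem gradedAeval_surjective [Finite σ] (ht : ∀ i, t i ∈ M)
    (hdense : Dense (Algebra.adjoin ℂ (Set.range t) : Set A)) {n : ℕ}
    (ih : ∀ P : MvPolynomial σ ℂ, aeval t P ∈ idealPowClosure M n → P ∈ idealOfVars σ ℂ ^ n) :
    Function.Surjective (gradedAeval ht n) := by
  intro y
  obtain ⟨⟨x, hx⟩, rfl⟩ := Submodule.Quotient.mk_surjective _ y
  obtain ⟨R, hR⟩ := exists_sub_aeval_mem_idealPowClosure ht hdense (n + 1) x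
  have hRn : R ∈ idealOfVars σ ℂ ^ n :=
    ih R (by simpa using sub_mem hx (idealPowClosure_antitone n.le_succ hR))
  have hhigh :=
    aeval_mem_idealPowClosure ht (sub_homogeneousComponent_mem_pow_idealOfVars_succ hRn)
  refine ⟨⟨_, homogeneousComponent_isHomogeneous n R⟩, (Submodule.Quotient.eq _).2 ?_⟩
  show aeval t (homogeneousComponent n R) - x ∈ idealPowClosure M (n + 1)
  have : aeval t (homogeneousComponent n R) - x =
      -((x - aeval t R) + aeval t (R - homogeneousComponent n R)) := by
    rw [map_sub]; ring
  exact this ▸ neg_mem (add_mem hR hhigh)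

theorem mem_pow_idealOfVars_succ_of_aeval_mem [Fintype σ] (ht : ∀ i, t i ∈ M)
    (hdense : Dense (Algebra.adjoin ℂ (Set.range t) : Set A)) {n : ℕ}
    (hdim : Module.rank ℂ (idealPowGraded M n) = ((n + Fintype.card σ - 1).choose n : Cardinal))
    (ih : ∀ P : MvPolynomial σ ℂ, aeval t P ∈ idealPowClosure M n → P ∈ idealOfVars σ ℂ ^ n)
    {P : MvPolynomial σ ℂ} (hP : aeval t P ∈ idealPowClosure M (n + 1)) :
    P ∈ idealOfVars σ ℂ ^ (n + 1) := by
  have : FiniteDimensional ℂ (homogeneousSubmodule σ ℂ n) :=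
    Module.Finite.iff_fg.2 (homogeneousSubmodule_fg σ ℂ n)
  have : FiniteDimensional ℂ (idealPowGraded M n) := Module.finite_of_rank_eq_nat hdim
  have hinj : Function.Injective (gradedAeval ht n) :=
    (LinearMap.injective_iff_surjective_of_finrank_eq_finrank
      ((finrank_homogeneousSubmodule n).trans (Module.finrank_eq_of_rank_eq hdim).symm)).2
      (gradedAeval_surjective ht hdense ih)
  have hPn := ih P (idealPowClosure_antitone n.le_succ hP)
  have hhigh := sub_homogeneousComponent_mem_pow_idealOfVars_succ hPn
  have hzero : homogeneousComponent n P = 0 :=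
    congrArg Subtype.val <|
      hinj (a₁ := ⟨_, homogeneousComponent_isHomogeneous n P⟩) (a₂ := 0) <| by
      rw [map_zero, gradedAeval_eq_zero_iff]
      simpa using sub_mem hP (aeval_mem_idealPowClosure ht hhigh)
  simpa [hzero] using hhigh

theorem aeval_mem_idealPowClosure_iff [Fintype σ] (ht : ∀ i, t i ∈ M)
    (hdense : Dense (Algebra.adjoin ℂ (Set.range t) : Set A))
    (hclosed : IsClosed (M : Set A)) (hM : M ≠ ⊤)
    (hdim : ∀ n, 1 ≤ n →
      Module.rank ℂ (idealPowGraded M n) = ((n + Fintype.card σ - 1).choose n : Cardinal))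
    {n : ℕ} {P : MvPolynomial σ ℂ} :
    aeval t P ∈ idealPowClosure M n ↔ P ∈ idealOfVars σ ℂ ^ n := by
  refine ⟨fun hP => ?_, aeval_mem_idealPowClosure ht⟩
  induction n generalizing P with
  | zero => simp
  | succ n ih =>
    cases n with
    | zero => exact mem_idealOfVars_of_aeval_mem_idealPowClosure_one ht hclosed hM hP
    | succ n =>
      exact mem_pow_idealOfVars_succ_of_aeval_mem ht hdense (hdim _ n.succ_pos) (fun _ => ih) hP

end Kernel

section Expansion

variable {A : Type*} [CommRing A] [Algebra ℂ A] [TopologicalSpace A] [IsTopologicalAddGroup A]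
  [ContinuousMul A] {M : Ideal A} {σ : Type*} [Finite σ] {t : σ → A}

def IsExpansion (M : Ideal A) (t : σ → A) (x : A) (F : MvPowerSeries σ ℂ) : Prop :=
  ∀ n, x - aeval t (truncTotal n F) ∈ idealPowClosure M n

theorem isExpansion_zero_iff {x : A} : IsExpansion M t x 0 ↔ ∀ n, x ∈ idealPowClosure M n := by
  simp [IsExpansion]

theorem isExpansion_aeval (ht : ∀ i, t i ∈ M) (P : MvPolynomial σ ℂ) :
    IsExpansion M t (aeval t P) P :=
  aeval_sub_aeval_truncTotal_mem ht P

theorem IsExpansion.add {x y : A} {F G : MvPowerSeries σ ℂ} (hx : IsExpansion M t x F)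
    (hy : IsExpansion M t y G) : IsExpansion M t (x + y) (F + G) := fun n => by
  simpa only [map_add, add_sub_add_comm] using add_mem (hx n) (hy n)

theorem IsExpansion.mul (ht : ∀ i, t i ∈ M) {x y : A} {F G : MvPowerSeries σ ℂ}
    (hx : IsExpansion M t x F) (hy : IsExpansion M t y G) : IsExpansion M t (x * y) (F * G) :=
  fun n => by
  have htrunc := aeval_mem_idealPowClosure ht
    (MvPowerSeries.truncTotal_mul_sub_mul_truncTotal_mem_pow_idealOfVars (n := n) F G)
  have : x * y - aeval t (truncTotal n (F * G)) =
      x * (y - aeval t (truncTotal n G)) +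
        aeval t (truncTotal n G) * (x - aeval t (truncTotal n F)) -
        aeval t (truncTotal n (F * G) - truncTotal n F * truncTotal n G) := by
    simp only [map_sub, map_mul]; ring
  exact this ▸ sub_mem (add_mem (mul_mem_idealPowClosure x (hy n))
    (mul_mem_idealPowClosure _ (hx n))) htrunc

theorem IsExpansion.unique
    (hker : ∀ n P, aeval t P ∈ idealPowClosure M n → P ∈ idealOfVars σ ℂ ^ n)
    {x : A} {F G : MvPowerSeries σ ℂ} (hF : IsExpansion M t x F) (hG : IsExpansion M t x G) :
    F = G := by
  ext d
  have hd := d.degree.lt_succ_self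
  have := coeff_eq_of_sub_aeval_mem hker (hF _) (hG _) hd
  rwa [MvPowerSeries.coeff_truncTotal _ hd, MvPowerSeries.coeff_truncTotal _ hd] at this

theorem exists_isExpansion (ht : ∀ i, t i ∈ M)
    (hker : ∀ n P, aeval t P ∈ idealPowClosure M n → P ∈ idealOfVars σ ℂ ^ n)
    (hsurj : ∀ n x, ∃ P : MvPolynomial σ ℂ, x - aeval t P ∈ idealPowClosure M n) (x : A) :
    ∃ F, IsExpansion M t x F := by
  choose P hP using fun n => hsurj n x
  let F : MvPowerSeries σ ℂ := fun d => coeff d (P (d.degree + 1))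
  refine ⟨F, fun n => ?_⟩
  have hlow : P n - truncTotal n F ∈ idealOfVars σ ℂ ^ n :=
    (mem_pow_idealOfVars_iff' n _).2 fun d hd => by
      rw [coeff_sub, MvPowerSeries.coeff_truncTotal _ hd, sub_eq_zero]
      exact coeff_eq_of_sub_aeval_mem hker (idealPowClosure_antitone hd (hP n)) (hP _)
        d.degree.lt_succ_self
  simpa only [map_sub, sub_add_sub_cancel] using
    add_mem (hP n) (aeval_mem_idealPowClosure ht hlow)

theorem exists_algHom_isExpansion (ht : ∀ i, t i ∈ M)
    (hker : ∀ n P, aeval t P ∈ idealPowClosure M n → P ∈ idealOfVars σ ℂ ^ n)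
    (hsurj : ∀ n x, ∃ P : MvPolynomial σ ℂ, x - aeval t P ∈ idealPowClosure M n) :
    ∃ Ψ : A →ₐ[ℂ] MvPowerSeries σ ℂ, ∀ x, IsExpansion M t x (Ψ x) := by
  choose Ψ hΨ using exists_isExpansion ht hker hsurj
  have hΨ_eq {x F} (hF : IsExpansion M t x F) : Ψ x = F := (hΨ x).unique hker hF
  exact ⟨
    { toFun := Ψ
      map_one' := hΨ_eq (by simpa using isExpansion_aeval ht 1)
      map_mul' := fun x y => hΨ_eq ((hΨ x).mul ht (hΨ y))
      map_zero' := hΨ_eq (by simpa using isExpansion_aeval ht 0)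
      map_add' := fun x y => hΨ_eq ((hΨ x).add (hΨ y))
      commutes' := fun c => hΨ_eq <| by
        simpa [MvPowerSeries.algebraMap_apply] using isExpansion_aeval ht (C c) }, hΨ⟩

end Expansion

theorem LinearMap.continuous_of_finiteDimensional_quotient {𝕜 E F : Type*}
    [NontriviallyNormedField 𝕜] [CompleteSpace 𝕜] [AddCommGroup E] [Module 𝕜 E]
    [TopologicalSpace E] [IsTopologicalAddGroup E] [ContinuousSMul 𝕜 E] [AddCommGroup F]
    [Module 𝕜 F] [TopologicalSpace F] [IsTopologicalAddGroup F] [ContinuousSMul 𝕜 F]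
    {Q : Submodule 𝕜 E} [IsClosed (Q : Set E)] [FiniteDimensional 𝕜 (E ⧸ Q)] (f : E →ₗ[𝕜] F)
    (h : Q ≤ LinearMap.ker f) : Continuous f :=
  (Q.liftQ f h).continuous_of_finiteDimensional.comp Q.isOpenQuotientMap_mkQ.continuous

theorem continuous_coeff_of_isExpansion {A : Type*} [CommRing A] [Algebra ℂ A]
    [TopologicalSpace A] [IsTopologicalAddGroup A] [ContinuousMul A] [ContinuousSMul ℂ A]
    {M : Ideal A} {σ : Type*} [Finite σ] {t : σ → A} (ht : ∀ i, t i ∈ M)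
    (hdense : Dense (Algebra.adjoin ℂ (Set.range t) : Set A))
    (hker : ∀ n P, aeval t P ∈ idealPowClosure M n → P ∈ idealOfVars σ ℂ ^ n)
    (Ψ : A →ₗ[ℂ] MvPowerSeries σ ℂ) (hΨ : ∀ x, IsExpansion M t x (Ψ x)) (d : σ →₀ ℕ) :
    Continuous fun x => MvPowerSeries.coeff d (Ψ x) := by
  have hd := d.degree.lt_succ_self
  have := finiteDimensional_quotient_idealPowClosure ht hdense (d.degree + 1)
  refine (MvPowerSeries.coeff d ∘ₗ Ψ).continuous_of_finiteDimensional_quotient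
    (Q := idealPowClosure M (d.degree + 1)) fun x hx => ?_
  have := coeff_eq_of_sub_aeval_mem hker (hΨ x _) (R := 0) (by simpa using hx) hd
  rwa [MvPowerSeries.coeff_truncTotal _ hd, coeff_zero] at this

theorem frechet_corollary26_general
    {A : Type*} [CommRing A] [Algebra ℂ A] [UniformSpace A] [IsUniformAddGroup A]
    [ContinuousMul A] [ContinuousSMul ℂ A]
    (k : ℕ) (t : Fin k → A)
    (hdense : Dense ((Algebra.adjoin ℂ (Set.range t) : Subalgebra ℂ A) : Set A))
    (M : Ideal A) (hclosed : IsClosed (M : Set A)) (hmax : M.IsMaximal)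
    (ht : ∀ i, t i ∈ M)
    (hdim : ∀ n : ℕ, 1 ≤ n →
      Module.rank ℂ
        (↥(idealPowClosure M n) ⧸
          Submodule.comap (idealPowClosure M n).subtype (idealPowClosure M (n + 1)))
        = ((n + k - 1).choose n : Cardinal)) :
    ∃ Ψ : (A ⧸ capClosure M) →ₐ[ℂ] MvPowerSeries (Fin k) ℂ,
      Function.Injective Ψ ∧
      (∀ i : Fin k, MvPowerSeries.X i ∈ Set.range Ψ) ∧
      (∀ I : Fin k →₀ ℕ,
        Continuous fun b : A ⧸ capClosure M => MvPowerSeries.coeff I (Ψ b)) := by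
  have hker n (P : MvPolynomial (Fin k) ℂ) :
      aeval t P ∈ idealPowClosure M n → P ∈ idealOfVars (Fin k) ℂ ^ n :=
    (aeval_mem_idealPowClosure_iff ht hdense hclosed hmax.ne_top
      (by simpa only [Fintype.card_fin] using hdim)).1
  obtain ⟨Ψ, hΨ⟩ :=
    exists_algHom_isExpansion ht hker (exists_sub_aeval_mem_idealPowClosure ht hdense)
  have hΨ_eq_zero x : Ψ x = 0 ↔ x ∈ capClosure M := by
    rw [mem_capClosure_iff, ← isExpansion_zero_iff (t := t)]
    exact ⟨fun h => h ▸ hΨ x, (hΨ x).unique hker⟩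
  refine ⟨Ideal.Quotient.liftₐ _ Ψ fun x hx => (hΨ_eq_zero x).2 hx, ?_,
    fun i => ⟨Ideal.Quotient.mk _ (t i), ?_⟩, fun I => ?_⟩
  · exact RingHom.lift_injective_of_ker_le_ideal _ _ fun x hx => (hΨ_eq_zero x).1 hx
  · exact (hΨ (t i)).unique hker (by simpa using isExpansion_aeval ht (X i))
  · exact (Submodule.isOpenQuotientMap_mkQ _).continuous_comp_iff.1
      (continuous_coeff_of_isExpansion ht hdense hker Ψ.toLinearMap hΨ I)

/-- Corollary 2.6: let `A` be a Fréchet algebra in which the polynomials in the identity and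
elements `t₁, …, t_k` are dense (i.e. the subalgebra generated by `t₁, …, t_k` is dense),
and let `M` be a closed maximal ideal containing `t₁, …, t_k` with
`dim (cl(Mⁿ)/cl(Mⁿ⁺¹)) = C(n+k-1, n)` for all `n ≥ 1`. Then `A / ⋂_{n≥1} cl(Mⁿ)` is a
Fréchet algebra of power series in `k` variables: there is an injective unital `ℂ`-algebra
homomorphism into `ℂ[[X₁,…,X_k]]` whose range contains the indeterminates and whose
coefficient functionals are continuous for the quotient topology. -/
theorem frechet_corollary26
    {A : Type*} [CommRing A] [Algebra ℂ A] [UniformSpace A] [IsUniformAddGroup A]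
    [ContinuousMul A] [ContinuousSMul ℂ A] [CompleteSpace A]
    (p : ℕ → Seminorm ℂ A) (hmono : Monotone p)
    (hsubmul : ∀ (m : ℕ) (x y : A), p m (x * y) ≤ p m x * p m y)
    (hws : WithSeminorms p)
    (k : ℕ) (t : Fin k → A)
    (hdense : Dense ((Algebra.adjoin ℂ (Set.range t) : Subalgebra ℂ A) : Set A))
    (M : Ideal A) (hclosed : IsClosed (M : Set A)) (hmax : M.IsMaximal)
    (ht : ∀ i, t i ∈ M)
    (hdim : ∀ n : ℕ, 1 ≤ n →
      Module.rank ℂ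
        (↥(idealPowClosure M n) ⧸
          Submodule.comap (idealPowClosure M n).subtype (idealPowClosure M (n + 1)))
        = ((n + k - 1).choose n : Cardinal)) :
    ∃ Ψ : (A ⧸ capClosure M) →ₐ[ℂ] MvPowerSeries (Fin k) ℂ,
      Function.Injective Ψ ∧
      (∀ i : Fin k, MvPowerSeries.X i ∈ Set.range Ψ) ∧
      (∀ I : Fin k →₀ ℕ,
        Continuous fun b : A ⧸ capClosure M => MvPowerSeries.coeff I (Ψ b)) :=
  frechet_corollary26_general k t hdense M hclosed hmax ht hdim
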